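/- Let $m \ge 1$ be an integer, $\alpha \in (0,1]$, and $f \in C^{0,\alpha}(\bar G_r)$ with $f(y',0) = 0$. Then the function $(y',t) \mapsto t^{-m} \int_0^t \int_0^{s_1} \cdots \int_0^{s_{m-1}} f(y', s_m)\, ds_m \, ds_{m-1} \cdots ds_1$ belongs to $C^{0,\alpha}(\bar G_r)$. -/

import Mathlib

open Set Metric

def Gset (m : ℕ) (r : ℝ) : Set (EuclideanSpace ℝ (Fin m) × ℝ) :=
  (Metric.ball (0 : EuclideanSpace ℝ (Fin m)) r) ×ˢ (Set.Ioo (0 : ℝ) r)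

/-- `iterInt f k` is the `k`-fold iterated integral of `f` in the last variable,
from `0` to `t`. -/
noncomputable def iterInt {m : ℕ} (f : EuclideanSpace ℝ (Fin m) × ℝ → ℝ) :
    ℕ → (EuclideanSpace ℝ (Fin m) × ℝ → ℝ)
  | 0 => f
  | (k + 1) => fun p => ∫ s in (0 : ℝ)..p.2, iterInt f k (p.1, s)

/-! For `h_k(y, t) = t⁻ᵏ I_k f(y, t)` the substitution `s = t u` gives
`h_{k+1}(y, t) = ∫₀¹ uᵏ h_k(y, t u) du`, also at `t = 0` since `f(y, 0) = 0`. Each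
`(y, t) ↦ h_k(y, t u)` with `u ∈ [0, 1]` is `α`-Hölder with the constant of `h_k`, and averaging
against a weight `uᵏ ≤ 1` keeps that constant; by induction every `h_k` is `α`-Hölder with the
constant of `h₀ = f`. -/

open scoped NNReal

theorem holderOnWith_of_dist_le {X Y : Type*} [PseudoMetricSpace X] [PseudoMetricSpace Y]
    {C r : ℝ≥0} {f : X → Y} {s : Set X}
    (h : ∀ x ∈ s, ∀ y ∈ s, dist (f x) (f y) ≤ C * dist x y ^ (r : ℝ)) :
    HolderOnWith C r f s := by
  intro x hx y hy
  rw [edist_dist, edist_dist, ENNReal.ofReal_rpow_of_nonneg dist_nonneg r.coe_nonneg,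
    ← ENNReal.ofReal_coe_nnreal, ← ENNReal.ofReal_mul C.coe_nonneg]
  exact ENNReal.ofReal_le_ofReal (h x hx y hy)

theorem dist_prod_mk_mul_le {X : Type*} [PseudoMetricSpace X] (p q : X × ℝ) {u : ℝ}
    (hu : u ∈ Icc (0 : ℝ) 1) : dist (p.1, p.2 * u) (q.1, q.2 * u) ≤ dist p q := by
  rw [Prod.dist_eq, Prod.dist_eq]
  refine max_le_max le_rfl ?_
  rw [Real.dist_eq, Real.dist_eq, ← sub_mul, abs_mul, abs_of_nonneg hu.1]
  exact mul_le_of_le_one_right (abs_nonneg _) hu.2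

theorem HolderOnWith.intervalIntegral_pow_mul_comp_mul {X : Type*} [PseudoMetricSpace X]
    {C r : ℝ≥0} {g : X × ℝ → ℝ} {s : Set (X × ℝ)} (hg : HolderOnWith C r g s) (hr : 0 < r)
    (hs : ∀ p ∈ s, ∀ u ∈ Icc (0 : ℝ) 1, (p.1, p.2 * u) ∈ s) (k : ℕ) :
    HolderOnWith C r (fun p => ∫ u in (0 : ℝ)..1, u ^ k * g (p.1, p.2 * u)) s := by
  have hint : ∀ p ∈ s,
      IntervalIntegrable (fun u => u ^ k * g (p.1, p.2 * u)) MeasureTheory.volume 0 1 := by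
    intro p hp
    refine ContinuousOn.intervalIntegrable ?_
    rw [uIcc_of_le zero_le_one]
    exact (continuousOn_pow k).mul
      ((hg.continuousOn hr).comp (by fun_prop) (fun u hu => hs p hp u hu))
  refine holderOnWith_of_dist_le fun p hp q hq => ?_
  rw [Real.dist_eq, ← intervalIntegral.integral_sub (hint p hp) (hint q hq)]
  have hpointwise : ∀ u ∈ uIoc (0 : ℝ) 1,
      ‖u ^ k * g (p.1, p.2 * u) - u ^ k * g (q.1, q.2 * u)‖ ≤ C * dist p q ^ (r : ℝ) := by
    intro u hu
    rw [uIoc_of_le zero_le_one] at hu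
    have hu' : u ∈ Icc (0 : ℝ) 1 := Ioc_subset_Icc_self hu
    rw [← mul_sub, norm_mul, Real.norm_of_nonneg (pow_nonneg hu'.1 k)]
    exact (mul_le_of_le_one_left dist_nonneg (pow_le_one₀ hu'.1 hu'.2)).trans
      (hg.dist_le_of_le (hs p hp u hu') (hs q hq u hu') (dist_prod_mk_mul_le p q hu'))
  simpa using intervalIntegral.norm_integral_le_of_norm_le_const hpointwise

theorem closure_Gset {m : ℕ} {r : ℝ} (hr : 0 < r) :
    closure (Gset m r) = closedBall (0 : EuclideanSpace ℝ (Fin m)) r ×ˢ Icc 0 r := by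
  rw [Gset, closure_prod_eq, closure_ball _ hr.ne', closure_Ioo hr.ne]

theorem prod_mk_mul_mem_closure_Gset {m : ℕ} {r : ℝ} (hr : 0 < r)
    {p : EuclideanSpace ℝ (Fin m) × ℝ} (hp : p ∈ closure (Gset m r)) {u : ℝ}
    (hu : u ∈ Icc (0 : ℝ) 1) : (p.1, p.2 * u) ∈ closure (Gset m r) := by
  rw [closure_Gset hr] at hp ⊢
  exact ⟨hp.1, mul_nonneg hp.2.1 hu.1, mul_le_of_le_one_right hp.2.1 hu.2 |>.trans hp.2.2⟩

section RescaledIterInt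

variable {m : ℕ} (f : EuclideanSpace ℝ (Fin m) × ℝ → ℝ)

noncomputable def rescaledIterInt (k : ℕ) (p : EuclideanSpace ℝ (Fin m) × ℝ) : ℝ :=
  (p.2 ^ k)⁻¹ * iterInt f k p

variable {f}

@[simp]
theorem rescaledIterInt_zero : rescaledIterInt f 0 = f := by
  funext p
  simp [rescaledIterInt, iterInt]

theorem rescaledIterInt_apply_zero {y : EuclideanSpace ℝ (Fin m)} (hf : f (y, 0) = 0) (k : ℕ) :
    rescaledIterInt f k (y, 0) = 0 := by
  cases k <;> simp [rescaledIterInt, iterInt, hf]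

theorem rescaledIterInt_succ {p : EuclideanSpace ℝ (Fin m) × ℝ} (hp : 0 ≤ p.2)
    (hf : f (p.1, 0) = 0) (k : ℕ) :
    rescaledIterInt f (k + 1) p = ∫ u in (0 : ℝ)..1, u ^ k * rescaledIterInt f k (p.1, p.2 * u) := by
  obtain ⟨y, t⟩ := p
  obtain rfl | ht := hp.eq_or_lt
  · simp [rescaledIterInt_apply_zero hf]
  have hweight : ∀ᵐ u, u ∈ uIoc (0 : ℝ) 1 →
      u ^ k * rescaledIterInt f k (y, t * u) = (t ^ k)⁻¹ * iterInt f k (y, t * u) := by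
    refine Filter.Eventually.of_forall fun u hu => ?_
    rw [uIoc_of_le zero_le_one] at hu
    have : u ≠ 0 := hu.1.ne'
    simp only [rescaledIterInt, mul_pow]
    field_simp
  rw [intervalIntegral.integral_congr_ae hweight, intervalIntegral.integral_const_mul,
    intervalIntegral.integral_comp_mul_left (fun s => iterInt f k (y, s)) ht.ne']
  simp only [rescaledIterInt, iterInt, mul_zero, mul_one, smul_eq_mul, pow_succ, mul_inv]
  ring

theorem HolderOnWith.rescaledIterInt {r : ℝ} (hr : 0 < r) {C α : ℝ≥0} (hα : 0 < α)
    (hf : HolderOnWith C α f (closure (Gset m r)))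
    (hzero : ∀ y ∈ closedBall (0 : EuclideanSpace ℝ (Fin m)) r, f (y, 0) = 0) (k : ℕ) :
    HolderOnWith C α (rescaledIterInt f k) (closure (Gset m r)) := by
  induction k with
  | zero => simpa using hf
  | succ k ih =>
    have hint := ih.intervalIntegral_pow_mul_comp_mul hα
      (fun p hp u hu => prod_mk_mul_mem_closure_Gset hr hp hu) k
    intro p hp q hq
    have hp' := hp
    have hq' := hq
    rw [closure_Gset hr] at hp' hq'
    rw [rescaledIterInt_succ hp'.2.1 (hzero _ hp'.1), rescaledIterInt_succ hq'.2.1 (hzero _ hq'.1)]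
    exact hint p hp q hq

end RescaledIterInt

theorem stmt_4_general {m : ℕ} {r α : ℝ} (k : ℕ) (hr : 0 < r)
    (hα : α ∈ Set.Ioc (0 : ℝ) 1)
    {f : EuclideanSpace ℝ (Fin m) × ℝ → ℝ} {Cf : NNReal}
    (hf : HolderOnWith Cf ⟨α, le_of_lt hα.1⟩ f (closure (Gset m r)))
    (hzero : ∀ y' ∈ closure (Metric.ball (0 : EuclideanSpace ℝ (Fin m)) r), f (y', 0) = 0) :
    ∃ C : NNReal, HolderOnWith C ⟨α, le_of_lt hα.1⟩
      (fun p : EuclideanSpace ℝ (Fin m) × ℝ => (p.2 ^ k)⁻¹ * iterInt f k p)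
      (closure (Gset m r)) := by
  rw [closure_ball _ hr.ne'] at hzero
  exact ⟨Cf, hf.rescaledIterInt hr hα.1 hzero k⟩

/-- Corollary A.4: if `f` is `α`-Hölder on `closure G_r` with `f(y',0) = 0`, then
`t^{-k}` times the `k`-fold iterated integral of `f` is `α`-Hölder on `closure G_r`. -/
theorem stmt_4 {m : ℕ} {r α : ℝ} (k : ℕ) (hk : 1 ≤ k) (hr : 0 < r)
    (hα : α ∈ Set.Ioc (0 : ℝ) 1)
    {f : EuclideanSpace ℝ (Fin m) × ℝ → ℝ} {Cf : NNReal}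
    (hf : HolderOnWith Cf ⟨α, le_of_lt hα.1⟩ f (closure (Gset m r)))
    (hzero : ∀ y' ∈ closure (Metric.ball (0 : EuclideanSpace ℝ (Fin m)) r), f (y', 0) = 0) :
    ∃ C : NNReal, HolderOnWith C ⟨α, le_of_lt hα.1⟩
      (fun p : EuclideanSpace ℝ (Fin m) × ℝ => (p.2 ^ k)⁻¹ * iterInt f k p)
      (closure (Gset m r)) :=
  stmt_4_general k hr hα hf hzero
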